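/- Let A ⊂ ℕ be finite and s a natural number such that the set A \ [Δ_4(s)] (elements of A that are ≥ s(s+1)/2) has at most s elements. Then for every a ∈ A, Ψ(A) − Ψ(A \ {a}) ≤ 2^{s−1}. -/

import Mathlib

/-!
For `L + 1 ≥ s`, passing from `Ψ_L` to `Ψ_{L+1}` changes the first summand by `-(L+1)·2^L` and
adds `2^L` for each `n ∈ E` with `∇_4(n) ≥ L + 1`; these `n` lie above `Δ_4(s)`, so there are at
most `s ≤ L + 1` of them. Hence `L ↦ Ψ_L(E)` is non-increasing from `s - 1` on and `Ψ(E)` is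
attained at some `L ≤ s - 1`. Taking that `L` for `A`, removing `a` lowers `Ψ_L(A)` by
`2^{min(∇_4(a), L)} ≤ 2^{s-1}`, while `Ψ(A \ {a}) ≥ Ψ_L(A \ {a})`.
-/


/-- `∇_4(n) := max{k ≥ 0 : k(k+1)/2 ≤ n}`. -/
def nabla4 (n : ℕ) : ℕ := Nat.findGreatest (fun k => Nat.choose (k + 1) 2 ≤ n) n

/-- `Φ(4, M) := Σ_{n=0}^{M-1} 2^{∇_4(n)}`. -/
def Phi4 (M : ℕ) : ℕ := ∑ n ∈ Finset.range M, 2 ^ nabla4 n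

/-- `Ψ_L(E) := (1−L)·2^L − 1 + Σ_{n ∈ E} 2^{min(∇_4(n), L)}`, an integer. -/
def PsiL (E : Finset ℕ) (L : ℕ) : ℤ :=
  (1 - (L : ℤ)) * 2 ^ L - 1 + ∑ n ∈ E, 2 ^ min (nabla4 n) L

/-- `Ψ(E) := sup_{L ∈ ℕ} Ψ_L(E)`. -/
noncomputable def Psi (E : Finset ℕ) : ℤ := sSup (Set.range (PsiL E))

open Finset

lemma le_nabla4_iff {k n : ℕ} : k ≤ nabla4 n ↔ (k + 1).choose 2 ≤ n := by
  refine ⟨fun h => ?_, fun h => Nat.le_findGreatest ?_ h⟩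
  · have hspec : (nabla4 n + 1).choose 2 ≤ n :=
      Nat.findGreatest_spec (P := fun k => (k + 1).choose 2 ≤ n) (Nat.zero_le n) (by simp)
    exact (Nat.choose_le_choose 2 (by omega)).trans hspec
  · have : k ≤ (k + 1).choose 2 := by simp [Nat.choose_succ_succ]
    omega

lemma filter_le_nabla4_eq_sdiff (E : Finset ℕ) (k : ℕ) :
    E.filter (k ≤ nabla4 ·) = E \ range ((k + 1).choose 2) := by
  ext n
  simp [le_nabla4_iff]

lemma two_pow_min_succ (m L : ℕ) :
    (2 : ℤ) ^ min m (L + 1) = 2 ^ min m L + if L + 1 ≤ m then 2 ^ L else 0 := by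
  split_ifs with h
  · rw [min_eq_right h, min_eq_right (by omega), pow_succ]
    ring
  · rw [min_eq_left (by omega), min_eq_left (by omega)]
    ring

lemma PsiL_succ (E : Finset ℕ) (L : ℕ) :
    PsiL E (L + 1) =
      PsiL E L + 2 ^ L * (#(E.filter (L + 1 ≤ nabla4 ·)) - (L + 1) : ℤ) := by
  simp only [PsiL, two_pow_min_succ, sum_add_distrib, ← sum_filter, sum_const, nsmul_eq_mul]
  push_cast
  ring

lemma PsiL_erase_add {E : Finset ℕ} {a : ℕ} (ha : a ∈ E) (L : ℕ) :
    PsiL (E.erase a) L + 2 ^ min (nabla4 a) L = PsiL E L := by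
  rw [PsiL, PsiL, ← add_sum_erase E _ ha]
  ring

section PsiLAntitone

variable {E : Finset ℕ} {s : ℕ}

lemma PsiL_succ_le (hcard : #(E \ range ((s + 1).choose 2)) ≤ s) {L : ℕ} (hsL : s ≤ L + 1) :
    PsiL E (L + 1) ≤ PsiL E L := by
  have hc : #(E.filter (L + 1 ≤ nabla4 ·)) ≤ L + 1 := by
    rw [filter_le_nabla4_eq_sdiff]
    refine le_trans (card_le_card ?_) (hcard.trans hsL)
    exact sdiff_subset_sdiff subset_rfl (range_subset_range.2 (Nat.choose_le_choose 2 (by omega)))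
  rw [PsiL_succ]
  have : (#(E.filter (L + 1 ≤ nabla4 ·)) : ℤ) ≤ L + 1 := by exact_mod_cast hc
  nlinarith [pow_pos (two_pos : (0 : ℤ) < 2) L]

lemma PsiL_le_PsiL_sub_one (hcard : #(E \ range ((s + 1).choose 2)) ≤ s) {L : ℕ}
    (hL : s - 1 ≤ L) : PsiL E L ≤ PsiL E (s - 1) := by
  induction L, hL using Nat.le_induction with
  | base => rfl
  | succ L hL ih => exact (PsiL_succ_le hcard (by omega)).trans ih

lemma exists_isGreatest_PsiL (hcard : #(E \ range ((s + 1).choose 2)) ≤ s) :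
    ∃ L ≤ s - 1, IsGreatest (Set.range (PsiL E)) (PsiL E L) := by
  obtain ⟨L, hL, hmax⟩ := (Iic (s - 1)).exists_max_image (PsiL E) ⟨0, by simp⟩
  refine ⟨L, mem_Iic.1 hL, ⟨L, rfl⟩, ?_⟩
  rintro _ ⟨L', rfl⟩
  rcases le_total L' (s - 1) with h | h
  · exact hmax L' (mem_Iic.2 h)
  · exact (PsiL_le_PsiL_sub_one hcard h).trans (hmax _ (mem_Iic.2 le_rfl))

end PsiLAntitone

theorem psi_removal_general (A : Finset ℕ) (s : ℕ)
    (hcard : (A \ Finset.range (Nat.choose (s + 1) 2)).card ≤ s)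
    (a : ℕ) (ha : a ∈ A) :
    Psi A - Psi (A.erase a) ≤ 2 ^ (s - 1) := by
  have hcard' : #(A.erase a \ range ((s + 1).choose 2)) ≤ s :=
    (card_le_card (sdiff_subset_sdiff (erase_subset a A) subset_rfl)).trans hcard
  obtain ⟨L, hL, hmax⟩ := exists_isGreatest_PsiL hcard
  obtain ⟨_, -, hmax'⟩ := exists_isGreatest_PsiL hcard'
  have hPsi : Psi A = PsiL A L := hmax.csSup_eq
  have hPsi' : PsiL (A.erase a) L ≤ Psi (A.erase a) := le_csSup hmax'.bddAbove ⟨L, rfl⟩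
  have hpow : (2 : ℤ) ^ min (nabla4 a) L ≤ 2 ^ (s - 1) :=
    pow_le_pow_right₀ (by norm_num) ((min_le_right _ _).trans hL)
  linarith [PsiL_erase_add ha L]

/-- If `A \ [Δ_4(s)]` has at most `s` elements (`s ≥ 1`), then removing any
element of `A` decreases `Ψ` by at most `2^{s-1}`. -/
theorem psi_removal (A : Finset ℕ) (s : ℕ) (hs : 1 ≤ s)
    (hcard : (A \ Finset.range (Nat.choose (s + 1) 2)).card ≤ s)
    (a : ℕ) (ha : a ∈ A) :
    Psi A - Psi (A.erase a) ≤ 2 ^ (s - 1) :=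
  psi_removal_general A s hcard a ha
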